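/- Let T=(V,E) be a leafless directed tree with a root and suppose T has no free end. Then for every vertex u ∈ V, the sequence γ(u,n) of cardinalities of child^n(u) is nondecreasing in n and tends to infinity as n → ∞. -/
import Mathlib


open Filter

attribute [local instance] Classical.propDecidable
open scoped ENNReal

/-- A directed tree: a locally finite directed graph on a (countably infinite)
vertex set with no directed circuits, whose underlying undirected graph is
connected, and in which every vertex has indegree at most one. -/
structure DirTree (V : Type) where
  E : V → V → Prop
  finIn : ∀ v : V, {u : V | E u v}.Finite
  finOut : ∀ v : V, {u : V | E v u}.Finite
  noCircuit : ∀ (n : ℕ) (c : Fin (n + 1) → V), Function.Injective c →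
    (∀ i : Fin n, E (c i.castSucc) (c i.succ)) → ¬ E (c (Fin.last n)) (c 0)
  conn : (SimpleGraph.fromRel E).Connected
  indeg : ∀ ⦃u w v : V⦄, E u v → E w v → u = w

namespace DirTree

variable {V : Type} (T : DirTree V)

/-- A root is a vertex of indegree zero. -/
def IsRoot (r : V) : Prop := ∀ u : V, ¬ T.E u r

/-- The set of children of a vertex. -/
def child (u : V) : Set V := {v : V | T.E u v}

/-- A leaf is a vertex of outdegree zero. -/
def IsLeaf (u : V) : Prop := ¬ (T.child u).Nonempty

/-- The (forward) shift `(S f)(v) = f (parent v)`, with `(S f)(root) = 0`. -/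
noncomputable def shift (f : V → ℂ) (v : V) : ℂ :=
  if h : ∃ u : V, T.E u v then f h.choose else 0

/-- The backward shift `(B f)(u) = ∑_{v ∈ child u} f v`. -/
noncomputable def bwd (f : V → ℂ) (u : V) : ℂ :=
  ∑' v : T.child u, f v.1

/-- The operator `(S* g)(u) = ∑_{v ∈ child u} g v · λ_v / λ_u`. -/
noncomputable def sstar (lam : V → ℝ) (g : V → ℂ) (u : V) : ℂ :=
  ∑' v : T.child u, g v.1 * ((lam v.1 / lam u : ℝ) : ℂ)

/-- `childN n u` is the set of vertices `v` with `parentⁿ v = u`. -/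
def childN (T : DirTree V) : ℕ → V → Set V
  | 0, u => {u}
  | n + 1, u => {w : V | ∃ v ∈ T.child u, w ∈ childN T n v}

/-- `γ(u,n)`, the cardinality of `childN n u`. -/
noncomputable def gam (u : V) (n : ℕ) : ℕ := (T.childN n u).ncard

/-- The `n`-th ancestor `parentⁿ u` of `u` (junk value `u` if it does not exist). -/
noncomputable def anc (u : V) (n : ℕ) : V :=
  if h : ∃ w : V, u ∈ T.childN n w then h.choose else u

/-- A leafless directed tree has a free end if some vertex is such that all of
its descendants have outdegree one. -/
def FreeEnd : Prop :=
  ∃ w : V, ∀ n : ℕ, 0 < n → ∀ v ∈ T.childN n w, (T.child v).ncard = 1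

end DirTree

/-- Membership in the weighted space `L^p(T,λ)`. -/
def MemLp' {V : Type} (lam : V → ℝ) (p : ℝ) (f : V → ℂ) : Prop :=
  Summable (fun v => ‖f v‖ ^ p * lam v)

/-- The norm of the weighted space `L^p(T,λ)`. -/
noncomputable def pNorm {V : Type} (lam : V → ℝ) (p : ℝ) (f : V → ℂ) : ℝ :=
  (∑' v, ‖f v‖ ^ p * lam v) ^ (1 / p)

/-- Boundedness of an operator on `L^p(T,λ)`. -/
def BoundedOn {V : Type} (lam : V → ℝ) (p : ℝ) (A : (V → ℂ) → (V → ℂ)) : Prop :=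
  ∃ C : ℝ, 0 ≤ C ∧ ∀ f : V → ℂ, MemLp' lam p f →
    MemLp' lam p (A f) ∧ pNorm lam p (A f) ≤ C * pNorm lam p f

/-- Hypercyclicity of an operator on `L^p(T,λ)`: some `f ∈ L^p(T,λ)` has dense
orbit `{Aⁿ f : n ∈ ℕ}`. -/
def Hypercyclic {V : Type} (lam : V → ℝ) (p : ℝ) (A : (V → ℂ) → (V → ℂ)) : Prop :=
  ∃ f : V → ℂ, MemLp' lam p f ∧ ∀ g : V → ℂ, MemLp' lam p g → ∀ ε : ℝ, 0 < ε →
    ∃ n : ℕ, MemLp' lam p (A^[n] f - g) ∧ pNorm lam p (A^[n] f - g) < ε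

namespace DirTree

variable {V : Type} (T : DirTree V)

lemma childN_finite : ∀ (n : ℕ) (u : V), (T.childN n u).Finite
  | 0, u => Set.finite_singleton u
  | n + 1, u => by
    have h : T.childN (n + 1) u = ⋃ v ∈ T.child u, T.childN n v := by
      ext w; simp [childN]
    rw [h]
    exact Set.Finite.biUnion (T.finOut u) fun v _ => childN_finite n v

lemma childN_nonempty (h : ∀ u : V, ¬ T.IsLeaf u) :
    ∀ (n : ℕ) (u : V), (T.childN n u).Nonempty
  | 0, u => ⟨u, rfl⟩
  | n + 1, u => by
    obtain ⟨v, hv⟩ := not_not.mp (h u)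
    obtain ⟨w, hw⟩ := childN_nonempty h n v
    exact ⟨w, v, hv, hw⟩

lemma childN_eq_of_mem : ∀ (n : ℕ) {v v' w : V},
    w ∈ T.childN n v → w ∈ T.childN n v' → v = v'
  | 0, v, v', w, h1, h2 => by
    have h1' : w = v := h1
    have h2' : w = v' := h2
    rw [← h1', ← h2']
  | n + 1, v, v', w, h1, h2 => by
    obtain ⟨x, hx, hw⟩ := h1
    obtain ⟨x', hx', hw'⟩ := h2
    have : x = x' := childN_eq_of_mem n hw hw'
    subst this
    exact T.indeg hx hx'

lemma childN_trans : ∀ (n : ℕ) (m : ℕ) {u v w : V},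
    v ∈ T.childN n u → w ∈ T.childN m v → w ∈ T.childN (n + m) u
  | 0, m, u, v, w, h1, h2 => by
    have h1' : v = u := h1
    rw [Nat.zero_add]
    rwa [← h1']
  | n + 1, m, u, v, w, h1, h2 => by
    obtain ⟨x, hx, hv⟩ := h1
    have hw : w ∈ T.childN (n + m) x := childN_trans n m hv h2
    have : n + 1 + m = (n + m) + 1 := by omega
    rw [this]
    exact ⟨x, hx, hw⟩

lemma childN_succ_eq : ∀ (n : ℕ) (u : V),
    T.childN (n + 1) u = {w : V | ∃ v ∈ T.childN n u, T.E v w}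
  | 0, u => by
    ext w
    constructor
    · rintro ⟨v, hv, hw⟩
      have hw' : w = v := hw
      exact ⟨u, rfl, hw' ▸ hv⟩
    · rintro ⟨v, hv, hE⟩
      have hv' : v = u := hv
      exact ⟨w, hv' ▸ hE, rfl⟩
  | n + 1, u => by
    ext w
    constructor
    · rintro ⟨v, hv, hw⟩
      rw [childN_succ_eq n v] at hw
      obtain ⟨x, hx, hE⟩ := hw
      exact ⟨x, ⟨v, hv, hx⟩, hE⟩
    · rintro ⟨x, hx, hE⟩
      obtain ⟨v, hv, hx'⟩ := hx
      refine ⟨v, hv, ?_⟩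
      rw [childN_succ_eq n v]
      exact ⟨x, hx', hE⟩

lemma gam_le_succ (hleafless : ∀ u : V, ¬ T.IsLeaf u) (u : V) (n : ℕ) :
    T.gam u n ≤ T.gam u (n + 1) := by
  have hchoice : ∀ v : V, ∃ c : V, T.E v c := fun v => not_not.mp (hleafless v)
  choose f hf using hchoice
  have hmaps : ∀ v ∈ T.childN n u, f v ∈ T.childN (n + 1) u := by
    intro v hv
    rw [childN_succ_eq]
    exact ⟨v, hv, hf v⟩
  have hinj : Set.InjOn f (T.childN n u) := by
    intro v _ v' _ h
    exact T.indeg (h ▸ hf v) (hf v')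
  exact Set.ncard_le_ncard_of_injOn f hmaps hinj (T.childN_finite (n + 1) u)

lemma gam_lt_succ (hleafless : ∀ u : V, ¬ T.IsLeaf u) (u : V) (n : ℕ)
    {v₀ a b : V} (hv₀ : v₀ ∈ T.childN n u) (ha : T.E v₀ a) (hb : T.E v₀ b)
    (hab : a ≠ b) : T.gam u n < T.gam u (n + 1) := by
  have hchoice : ∀ v : V, ∃ c : V, T.E v c := fun v => not_not.mp (hleafless v)
  choose f hf using hchoice
  set g : V → V := fun v => if v = v₀ then a else f v with hg
  have hgE : ∀ v : V, T.E v (g v) := by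
    intro v
    by_cases h : v = v₀
    · simp only [hg, h, if_pos rfl]; exact h ▸ ha
    · simp only [hg, if_neg h]; exact hf v
  have hmaps : ∀ v ∈ T.childN n u, g v ∈ T.childN (n + 1) u := by
    intro v hv
    rw [childN_succ_eq]
    exact ⟨v, hv, hgE v⟩
  have hinj : Set.InjOn g (T.childN n u) := by
    intro v _ v' _ h
    exact T.indeg (h ▸ hgE v) (hgE v')
  have hbmem : b ∈ T.childN (n + 1) u := by
    rw [childN_succ_eq]
    exact ⟨v₀, hv₀, hb⟩
  have hbnot : b ∉ g '' (T.childN n u) := by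
    rintro ⟨v, hv, hgv⟩
    by_cases h : v = v₀
    · apply hab
      rw [h] at hgv
      simpa [hg] using hgv
    · apply h
      have : T.E v b := hgv ▸ hgE v
      exact T.indeg this hb
  have hfin : (T.childN n u).Finite := T.childN_finite n u
  have hsub : insert b (g '' (T.childN n u)) ⊆ T.childN (n + 1) u := by
    rintro x (rfl | ⟨v, hv, rfl⟩)
    · exact hbmem
    · exact hmaps v hv
  have h1 : (insert b (g '' (T.childN n u))).ncard
      = (g '' (T.childN n u)).ncard + 1 :=
    Set.ncard_insert_of_notMem hbnot (hfin.image g)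
  have h2 : (g '' (T.childN n u)).ncard = (T.childN n u).ncard :=
    Set.ncard_image_of_injOn hinj
  have h3 : (insert b (g '' (T.childN n u))).ncard ≤ (T.childN n u).ncard + 1 := by
    rw [h1, h2]
  have h4 : (insert b (g '' (T.childN n u))).ncard ≤ (T.childN (n + 1) u).ncard :=
    Set.ncard_le_ncard hsub (T.childN_finite (n + 1) u)
  have : (T.childN n u).ncard + 1 ≤ (T.childN (n + 1) u).ncard := by
    rw [← h2, ← h1]; exact h4
  simpa [gam] using this

end DirTree

/-- In a leafless rooted directed tree with no free end, for
every vertex `u` the sequence `γ(u,n)` is nondecreasing in `n` and tends to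
infinity. -/
theorem stmt_19 {V : Type} [Countable V] [Infinite V] (T : DirTree V)
    (hleafless : ∀ u : V, ¬ T.IsLeaf u) (hroot : ∃ r : V, T.IsRoot r)
    (hfe : ¬ T.FreeEnd) :
    ∀ u : V, Monotone (fun n : ℕ => T.gam u n) ∧
      Tendsto (fun n : ℕ => T.gam u n) atTop atTop := by
  intro u
  have hmono : Monotone (fun n : ℕ => T.gam u n) :=
    monotone_nat_of_le_succ fun n => T.gam_le_succ hleafless u n
  refine ⟨hmono, hmono.tendsto_atTop_atTop ?_⟩
  unfold DirTree.FreeEnd at hfe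
  push_neg at hfe
  intro b
  induction b with
  | zero => exact ⟨0, Nat.zero_le _⟩
  | succ b ih =>
    obtain ⟨m, hm⟩ := ih
    obtain ⟨w, hw⟩ := T.childN_nonempty hleafless m u
    obtain ⟨n, hn, v, hv, hne⟩ := hfe w
    have hvmem : v ∈ T.childN (m + n) u := T.childN_trans m n hw hv
    have hfin : (T.child v).Finite := T.finOut v
    have hnon : (T.child v).Nonempty := not_not.mp (hleafless v)
    have h1 : 1 ≤ (T.child v).ncard := by
      have := (Set.ncard_pos hfin).mpr hnon
      omega
    have h2 : 1 < (T.child v).ncard := lt_of_le_of_ne h1 (Ne.symm hne)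
    obtain ⟨a, ha, c, hc, hac⟩ := (Set.one_lt_ncard hfin).mp h2
    have hlt : T.gam u (m + n) < T.gam u (m + n + 1) :=
      T.gam_lt_succ hleafless u (m + n) hvmem ha hc hac
    refine ⟨m + n + 1, ?_⟩
    have : T.gam u m ≤ T.gam u (m + n) := hmono (Nat.le_add_right m n)
    omega
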